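/- arXiv:1401.1471 — 4 statements merged into one kernel-verified Lean document; each statement's English description precedes it below -/
import Mathlib

section
/- Breaking up blocks does not decrease dimension: if (X, B) is a PBD(v,K) of dimension at least d, and (X, B₁) is obtained by replacing each block B ∈ B with the blocks of a PBD(|B|, L) on B, then (X, B₁) is a PBD(v, L) of dimension at least d. -/
def IsPBD {α : Type*} [DecidableEq α] (X : Finset α) (Bs : Finset (Finset α))
    (K : Set ℕ) : Prop :=
  (∀ B ∈ Bs, B ⊆ X ∧ B.card ∈ K) ∧
  ∀ x ∈ X, ∀ y ∈ X, x ≠ y → ∃! B, B ∈ Bs ∧ x ∈ B ∧ y ∈ B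

/-- A subspace of a linear space: the block through any two of its points
is contained in it. -/
def IsSubspace {α : Type*} (Bs : Finset (Finset α)) (S : Finset α) : Prop :=
  ∀ x ∈ S, ∀ y ∈ S, x ≠ y → ∀ B ∈ Bs, x ∈ B → y ∈ B → B ⊆ S

/-- Dimension at least `d`: every set of at most `d` points is contained in a
proper subspace. -/
def DimGE {α : Type*} (X : Finset α) (Bs : Finset (Finset α)) (d : ℕ) : Prop :=
  ∀ Y ⊆ X, Y.card ≤ d → ∃ S, S ⊆ X ∧ S ≠ X ∧ Y ⊆ S ∧ IsSubspace Bs S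

/-- Breaking up blocks preserves the PBD property and does not decrease the
dimension. -/
theorem stmt_6 {α : Type*} [DecidableEq α] (K L : Set ℕ)
    (hK : ∀ k ∈ K, 2 ≤ k) (hL : ∀ l ∈ L, 2 ≤ l)
    (X : Finset α) (Bs : Finset (Finset α)) (h : IsPBD X Bs K)
    (d : ℕ) (hd : DimGE X Bs d)
    (f : Finset α → Finset (Finset α)) (hf : ∀ B ∈ Bs, IsPBD B (f B) L) :
    IsPBD X (Bs.biUnion f) L ∧ DimGE X (Bs.biUnion f) d := by
  obtain ⟨h1, h2⟩ := h
  constructor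
  · constructor
    · intro C hC
      obtain ⟨B, hB, hCB⟩ := Finset.mem_biUnion.mp hC
      obtain ⟨hf1, _⟩ := hf B hB
      exact ⟨(hf1 C hCB).1.trans (h1 B hB).1, (hf1 C hCB).2⟩
    · intro x hx y hy hxy
      obtain ⟨B, ⟨hB, hxB, hyB⟩, huniq⟩ := h2 x hx y hy hxy
      obtain ⟨hf1, hf2⟩ := hf B hB
      obtain ⟨C, ⟨hC, hxC, hyC⟩, hCuniq⟩ := hf2 x hxB y hyB hxy
      refine ⟨C, ⟨Finset.mem_biUnion.mpr ⟨B, hB, hC⟩, hxC, hyC⟩, ?_⟩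
      rintro C' ⟨hC', hxC', hyC'⟩
      obtain ⟨B', hB', hC'B'⟩ := Finset.mem_biUnion.mp hC'
      obtain ⟨hf1', _⟩ := hf B' hB'
      have hsub := (hf1' C' hC'B').1
      have hBB : B' = B := huniq B' ⟨hB', hsub hxC', hsub hyC'⟩
      subst hBB
      exact hCuniq C' ⟨hC'B', hxC', hyC'⟩
  · intro Y hY hYd
    obtain ⟨S, hSX, hSne, hYS, hSsub⟩ := hd Y hY hYd
    refine ⟨S, hSX, hSne, hYS, ?_⟩
    intro x hx y hy hxy C hC hxC hyC
    obtain ⟨B, hB, hCB⟩ := Finset.mem_biUnion.mp hC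
    have hsub := ((hf B hB).1 C hCB).1
    exact fun z hz =>
      hSsub x hx y hy hxy B hB (hsub hxC) (hsub hyC) (hsub hz)
end

section
/- If a GDD (X, Π, B) has strong dimension at least d, then the PBD (X ∪ {∞}, B ∪ {G ∪ {∞} : G ∈ Π}) obtained by adding a point has dimension at least d. -/
/-- A group divisible design: `Gs` partitions `X` into groups, blocks have at
least two points, a block meets each group in at most one point, and every
pair of points from distinct groups lies in exactly one block. -/
def IsGDD {α : Type*} [DecidableEq α] (X : Finset α)
    (Gs Bs : Finset (Finset α)) : Prop :=
  (∀ G ∈ Gs, G ⊆ X) ∧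
  (∀ x ∈ X, ∃! G, G ∈ Gs ∧ x ∈ G) ∧
  (∀ B ∈ Bs, B ⊆ X ∧ 2 ≤ B.card) ∧
  (∀ B ∈ Bs, ∀ G ∈ Gs, (B ∩ G).card ≤ 1) ∧
  (∀ x ∈ X, ∀ y ∈ X,
    (∃ G ∈ Gs, ∃ G' ∈ Gs, G ≠ G' ∧ x ∈ G ∧ y ∈ G') →
    ∃! B, B ∈ Bs ∧ x ∈ B ∧ y ∈ B)

/-- A strong subspace of a GDD: it meets each group in all or no points, and
contains the block through any two of its points. -/
def IsStrongSubspace {α : Type*} (Gs Bs : Finset (Finset α))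
    (S : Finset α) : Prop :=
  (∀ G ∈ Gs, G ⊆ S ∨ ∀ p ∈ G, p ∉ S) ∧
  ∀ x ∈ S, ∀ y ∈ S, x ≠ y → ∀ B ∈ Bs, x ∈ B → y ∈ B → B ⊆ S

/-- Strong dimension at least `d`: every set of at most `d` points is
contained in a proper (disjoint from some group) strong subspace. -/
def StrongDimGE {α : Type*} (X : Finset α) (Gs Bs : Finset (Finset α))
    (d : ℕ) : Prop :=
  ∀ Y ⊆ X, Y.card ≤ d → ∃ S, S ⊆ X ∧ Y ⊆ S ∧ IsStrongSubspace Gs Bs S ∧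
    ∃ G ∈ Gs, ∀ p ∈ G, p ∉ S

/-- If a GDD has strong dimension at least d, then the PBD obtained by
adding a point (turning each extended group into a block) has dimension at
least d. -/
theorem stmt_12 {α : Type*} [DecidableEq α]
    (X : Finset α) (Gs Bs : Finset (Finset α)) (h : IsGDD X Gs Bs)
    (hG : ∀ G ∈ Gs, G.Nonempty) (p : α) (hp : p ∉ X)
    (d : ℕ) (hd : StrongDimGE X Gs Bs d) :
    DimGE (insert p X) (Bs ∪ Gs.image (insert p)) d := by
  intro Y hY hYcard
  obtain ⟨S, hSX, hYS, ⟨hstrong, hblocks⟩, G, hGGs, hGS⟩ :=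
    hd (Y.erase p) (fun x hx => by
      have := hY (Finset.mem_of_mem_erase hx)
      rcases Finset.mem_insert.1 this with h1 | h1
      · exact absurd h1 (Finset.ne_of_mem_erase hx)
      · exact h1)
      (le_trans (Finset.card_le_card (Finset.erase_subset _ _)) hYcard)
  refine ⟨insert p S, ?_, ?_, ?_, ?_⟩
  · exact Finset.insert_subset_insert p hSX
  · intro hEq
    obtain ⟨g, hg⟩ := hG G hGGs
    have hgX : g ∈ X := (h.1 G hGGs) hg
    have : g ∈ insert p S := hEq ▸ Finset.mem_insert_of_mem hgX
    rcases Finset.mem_insert.1 this with h1 | h1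
    · exact hp (h1 ▸ hgX)
    · exact hGS g hg h1
  · intro y hy
    by_cases hyp : y = p
    · exact hyp ▸ Finset.mem_insert_self p S
    · exact Finset.mem_insert_of_mem (hYS (Finset.mem_erase.2 ⟨hyp, hy⟩))
  · intro x hx y hy hxy B hB hxB hyB
    rcases Finset.mem_union.1 hB with hB | hB
    · have hBX := (h.2.2.1 B hB).1
      have hxp : x ≠ p := fun e => hp (e ▸ hBX hxB)
      have hyp : y ≠ p := fun e => hp (e ▸ hBX hyB)
      have hxS : x ∈ S := (Finset.mem_insert.1 hx).resolve_left hxp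
      have hyS : y ∈ S := (Finset.mem_insert.1 hy).resolve_left hyp
      exact (hblocks x hxS y hyS hxy B hB hxB hyB).trans (Finset.subset_insert p S)
    · obtain ⟨G', hG', rfl⟩ := Finset.mem_image.1 hB
      -- at least one of x, y is not p
      have key : ∃ z, z ∈ G' ∧ z ∈ S := by
        by_cases hxp : x = p
        · have hyp : y ≠ p := fun e => hxy (hxp.trans e.symm)
          exact ⟨y, (Finset.mem_insert.1 hyB).resolve_left hyp,
            (Finset.mem_insert.1 hy).resolve_left hyp⟩
        · exact ⟨x, (Finset.mem_insert.1 hxB).resolve_left hxp,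
            (Finset.mem_insert.1 hx).resolve_left hxp⟩
      obtain ⟨z, hzG, hzS⟩ := key
      have hGsub : G' ⊆ S := (hstrong G' hG').resolve_right (fun hf => hf z hzG hzS)
      exact Finset.insert_subset_insert p hGsub
end

section
/- Wilson's fundamental construction yields a GDD: given a master GDD (X, Π, B) and a weight function ω: X → ℕ, replace each point x by ω(x) new points and each block B by a GDD on the points arising from B whose groups are the fibers over points of B; then the resulting structure, with groups given by the fibers over the groups of Π, is a GDD with group sizes Σ_{x∈G} ω(x) for G ∈ Π. -/
/-- The blow-up of a point set: each point x is replaced by the points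
(x, i) for i < ω x. -/
def fiber {α : Type*} [DecidableEq α] (ω : α → ℕ) (S : Finset α) :
    Finset (α × ℕ) :=
  S.biUnion fun x => {x} ×ˢ Finset.range (ω x)

lemma mem_fiber {α : Type*} [DecidableEq α] (ω : α → ℕ) (S : Finset α) (p : α × ℕ) :
    p ∈ fiber ω S ↔ p.1 ∈ S ∧ p.2 < ω p.1 := by
  obtain ⟨x, i⟩ := p
  simp [fiber]

lemma fiber_mono {α : Type*} [DecidableEq α] (ω : α → ℕ) {S T : Finset α}
    (h : S ⊆ T) : fiber ω S ⊆ fiber ω T := by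
  intro p hp
  rw [mem_fiber] at *
  exact ⟨h hp.1, hp.2⟩

lemma fiber_card {α : Type*} [DecidableEq α] (ω : α → ℕ) (G : Finset α) :
    (fiber ω G).card = ∑ x ∈ G, ω x := by
  rw [fiber, Finset.card_biUnion]
  · simp
  · intro x _ y _ hxy
    simp [Finset.disjoint_left]
    aesop

/-- Wilson's fundamental construction: blowing up the points of a master GDD
with weights ω and replacing each block B by an ingredient GDD on its
blown-up points (with the fibers over points of B as groups) gives a GDD
whose groups are the fibers over the master groups; the new group sizes are
the sums of the weights over the old groups. -/
theorem stmt_14 {α : Type*} [DecidableEq α]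
    (X : Finset α) (Gs Bs : Finset (Finset α)) (h : IsGDD X Gs Bs)
    (ω : α → ℕ) (ing : Finset α → Finset (Finset (α × ℕ)))
    (hing : ∀ B ∈ Bs,
      IsGDD (fiber ω B) (B.image fun x => fiber ω {x}) (ing B)) :
    IsGDD (fiber ω X) (Gs.image (fiber ω)) (Bs.biUnion ing) ∧
    ∀ G ∈ Gs, (fiber ω G).card = ∑ x ∈ G, ω x := by
  
  obtain ⟨hGX, hGu, hBc, hBG, hpair⟩ := h
  refine ⟨⟨?_, ?_, ?_, ?_, ?_⟩, fun G _ => fiber_card ω G⟩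
  · rintro Gb hGb
    simp only [Finset.mem_image] at hGb
    obtain ⟨G, hG, rfl⟩ := hGb
    exact fiber_mono ω (hGX G hG)
  · rintro ⟨x, i⟩ hx
    rw [mem_fiber] at hx
    obtain ⟨G, ⟨hG, hxG⟩, hGuniq⟩ := hGu x hx.1
    refine ⟨fiber ω G, ⟨Finset.mem_image_of_mem _ hG, (mem_fiber ω G _).2 ⟨hxG, hx.2⟩⟩, ?_⟩
    rintro Gb ⟨hGb, hxGb⟩
    simp only [Finset.mem_image] at hGb
    obtain ⟨G', hG', rfl⟩ := hGb
    rw [mem_fiber] at hxGb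
    rw [hGuniq G' ⟨hG', hxGb.1⟩]
  · intro b hb
    simp only [Finset.mem_biUnion] at hb
    obtain ⟨B, hB, hbB⟩ := hb
    obtain ⟨h1, _, h3, _, _⟩ := hing B hB
    exact ⟨((h3 b hbB).1).trans (fiber_mono ω (hBc B hB).1), (h3 b hbB).2⟩
  · intro b hb Gb hGb
    simp only [Finset.mem_biUnion] at hb
    obtain ⟨B, hB, hbB⟩ := hb
    simp only [Finset.mem_image] at hGb
    obtain ⟨G, hG, rfl⟩ := hGb
    obtain ⟨_, _, h3, h4, _⟩ := hing B hB
    -- B ∩ G has at most one element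
    rcases Finset.eq_empty_or_nonempty (B ∩ G) with he | ⟨x₀, hx₀⟩
    · -- intersection empty
      have : b ∩ fiber ω G = ∅ := by
        rw [Finset.eq_empty_iff_forall_notMem]
        rintro p hp
        rw [Finset.mem_inter, mem_fiber] at hp
        have hpB := (h3 b hbB).1 hp.1
        rw [mem_fiber] at hpB
        have : p.1 ∈ B ∩ G := Finset.mem_inter.2 ⟨hpB.1, hp.2.1⟩
        simp [he] at this
      simp [this]
    · rw [Finset.mem_inter] at hx₀
      have hsub : b ∩ fiber ω G ⊆ b ∩ fiber ω {x₀} := by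
        intro p hp
        rw [Finset.mem_inter, mem_fiber] at hp ⊢
        have hpB := (h3 b hbB).1 hp.1
        rw [mem_fiber] at hpB
        have hcard := hBG B hB G hG
        have hx₁ : p.1 ∈ B ∩ G := Finset.mem_inter.2 ⟨hpB.1, hp.2.1⟩
        have : p.1 = x₀ := by
          by_contra hne
          have : 2 ≤ (B ∩ G).card :=
            Finset.one_lt_card.2 ⟨p.1, hx₁, x₀, Finset.mem_inter.2 hx₀, hne⟩
          omega
        exact ⟨hp.1, by simp [this], hp.2.2⟩
      calc (b ∩ fiber ω G).card ≤ (b ∩ fiber ω {x₀}).card := Finset.card_le_card hsub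
        _ ≤ 1 := h4 b hbB _ (Finset.mem_image_of_mem _ hx₀.1)
  · rintro p hp q hq ⟨Gb, hGb, Gb', hGb', hne, hpGb, hqGb'⟩
    simp only [Finset.mem_image] at hGb hGb'
    obtain ⟨G, hG, rfl⟩ := hGb
    obtain ⟨G', hG', rfl⟩ := hGb'
    rw [mem_fiber] at hp hq hpGb hqGb'
    have hGne : G ≠ G' := fun hGG => hne (by rw [hGG])
    have hxy : p.1 ≠ q.1 := by
      rintro hpq
      obtain ⟨_, _, huniq⟩ := hGu p.1 hp.1
      exact hGne ((huniq G ⟨hG, hpGb.1⟩).trans (huniq G' ⟨hG', hpq ▸ hqGb'.1⟩).symm)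
    obtain ⟨B, ⟨hB, hpB, hqB⟩, hBuniq⟩ :=
      hpair p.1 hp.1 q.1 hq.1 ⟨G, hG, G', hG', hGne, hpGb.1, hqGb'.1⟩
    obtain ⟨_, _, _, _, h5⟩ := hing B hB
    have hpf : p ∈ fiber ω B := (mem_fiber ω B p).2 ⟨hpB, hp.2⟩
    have hqf : q ∈ fiber ω B := (mem_fiber ω B q).2 ⟨hqB, hq.2⟩
    have hfne : fiber ω {p.1} ≠ fiber ω {q.1} := by
      intro hcon
      have : p ∈ fiber ω {q.1} := hcon ▸ (mem_fiber ω _ p).2 ⟨by simp, hp.2⟩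
      rw [mem_fiber] at this
      exact hxy (by simpa using this.1)
    obtain ⟨b, ⟨hb, hpb, hqb⟩, hbuniq⟩ := h5 p hpf q hqf
      ⟨fiber ω {p.1}, Finset.mem_image_of_mem _ hpB,
       fiber ω {q.1}, Finset.mem_image_of_mem _ hqB, hfne,
       (mem_fiber ω _ p).2 ⟨by simp, hp.2⟩, (mem_fiber ω _ q).2 ⟨by simp, hq.2⟩⟩
    refine ⟨b, ⟨Finset.mem_biUnion.2 ⟨B, hB, hb⟩, hpb, hqb⟩, ?_⟩
    rintro b' ⟨hb', hpb', hqb'⟩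
    rw [Finset.mem_biUnion] at hb'
    obtain ⟨B', hB', hb'B'⟩ := hb'
    obtain ⟨_, _, h3', _, _⟩ := hing B' hB'
    have hpB' := (h3' b' hb'B').1 hpb'
    have hqB' := (h3' b' hb'B').1 hqb'
    rw [mem_fiber] at hpB' hqB'
    have : B' = B := hBuniq B' ⟨hB', hpB'.1, hqB'.1⟩
    subst this
    exact hbuniq b' ⟨hb'B', hpb', hqb'⟩
end

section
/- Wilson's fundamental construction preserves strong dimension: if the master GDD has strong dimension at least d, then the GDD produced by blowing up points with weights ω and filling blocks with ingredient GDDs also has strong dimension at least d. -/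
/-- Wilson's fundamental construction preserves strong dimension: if the
master GDD has strong dimension at least d, so does the resultant GDD. -/
theorem stmt_15 {α : Type*} [DecidableEq α]
    (X : Finset α) (Gs Bs : Finset (Finset α)) (h : IsGDD X Gs Bs)
    (ω : α → ℕ) (ing : Finset α → Finset (Finset (α × ℕ)))
    (hing : ∀ B ∈ Bs,
      IsGDD (fiber ω B) (B.image fun x => fiber ω {x}) (ing B))
    (d : ℕ) (hd : StrongDimGE X Gs Bs d) :
    StrongDimGE (fiber ω X) (Gs.image (fiber ω)) (Bs.biUnion ing) d := by
  intro Y hYX hYd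
  -- project Y to the master point set
  set Y' : Finset α := Y.image Prod.fst with hY'
  have hY'X : Y' ⊆ X := by
    intro x hx
    rw [hY', Finset.mem_image] at hx
    obtain ⟨p, hp, rfl⟩ := hx
    exact ((mem_fiber ω X p).mp (hYX hp)).1
  have hY'd : Y'.card ≤ d := le_trans (Finset.card_image_le) hYd
  obtain ⟨S, hSX, hY'S, ⟨hSg, hSb⟩, G, hG, hGS⟩ := hd Y' hY'X hY'd
  refine ⟨fiber ω S, fiber_mono ω hSX, ?_, ⟨?_, ?_⟩, fiber ω G,
    Finset.mem_image_of_mem _ hG, ?_⟩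
  · -- Y ⊆ fiber ω S
    intro p hp
    rw [mem_fiber]
    refine ⟨hY'S ?_, ((mem_fiber ω X p).mp (hYX hp)).2⟩
    exact Finset.mem_image_of_mem _ hp
  · -- groups: all or nothing
    intro G' hG'
    rw [Finset.mem_image] at hG'
    obtain ⟨H, hH, rfl⟩ := hG'
    rcases hSg H hH with hc | hc
    · exact Or.inl (fiber_mono ω hc)
    · refine Or.inr fun p hp hpS => ?_
      rw [mem_fiber] at hp hpS
      exact hc p.1 hp.1 hpS.1
  · -- blocks through two points of the fiber lie in the fiber
    intro x hx y hy hxy B' hB' hxB hyB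
    rw [Finset.mem_biUnion] at hB'
    obtain ⟨B, hB, hB'B⟩ := hB'
    obtain ⟨hGsub, hpart, hblk, hmeet, hpair⟩ := hing B hB
    have hsubB : B' ⊆ fiber ω B := (hblk B' hB'B).1
    have hx1 : x.1 ∈ B := ((mem_fiber ω B x).mp (hsubB hxB)).1
    have hy1 : y.1 ∈ B := ((mem_fiber ω B y).mp (hsubB hyB)).1
    by_cases hfst : x.1 = y.1
    · -- same fiber group: contradicts block meeting a group in ≤ 1 point
      exfalso
      have hgrp : fiber ω {x.1} ∈ B.image fun z => fiber ω {z} :=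
        Finset.mem_image_of_mem _ hx1
      have hle := hmeet B' hB'B _ hgrp
      have hxm : x ∈ B' ∩ fiber ω {x.1} := by
        rw [Finset.mem_inter, mem_fiber]
        exact ⟨hxB, Finset.mem_singleton_self _, ((mem_fiber ω S x).mp hx).2⟩
      have hym : y ∈ B' ∩ fiber ω {x.1} := by
        rw [Finset.mem_inter, mem_fiber, hfst]
        exact ⟨hyB, Finset.mem_singleton_self _, ((mem_fiber ω S y).mp hy).2⟩
      have : ({x, y} : Finset (α × ℕ)) ⊆ B' ∩ fiber ω {x.1} := by
        intro p hp
        rcases Finset.mem_insert.mp hp with rfl | hp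
        · exact hxm
        · rw [Finset.mem_singleton] at hp; subst hp; exact hym
      have h2 : 2 ≤ (B' ∩ fiber ω {x.1}).card := by
        calc 2 = ({x, y} : Finset (α × ℕ)).card := by
                  rw [Finset.card_insert_of_notMem (by simpa), Finset.card_singleton]
             _ ≤ _ := Finset.card_le_card this
      omega
    · -- distinct projections: the master block through them lies in S
      have hBS : B ⊆ S :=
        hSb x.1 ((mem_fiber ω S x).mp hx).1 y.1 ((mem_fiber ω S y).mp hy).1
          hfst B hB hx1 hy1
      exact fun p hp => fiber_mono ω hBS (hsubB hp)
  · -- properness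
    intro p hp hpS
    rw [mem_fiber] at hp hpS
    exact hGS p.1 hp.1 hpS.1
end
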